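/- (Lemma 1 of the paper.) Let D be a probability distribution over X × {1,…,k} with k ≥ 2, θ ∈ [0,1], and let D' be the distribution over X × {1,…,k} × {False, True} generated as follows: draw (x,y) ∼ D; with probability θ output (x, y, True); with probability 1−θ output (x, ȳ, False) where ȳ is chosen uniformly from the k−1 labels different from y. For a classifier h : X → {1,…,k}, define R^MC(h) = E_{(x,y)∼D}[I(h(x) ≠ y)] and R^LC(h) = E_{(x,y,γ)∼D'}[I(γ = (y ≠ h(x)))], where γ = (y ≠ h(x)) means γ = True iff y ≠ h(x). Then R^MC(h) = ((k−1)/(θ(k−2)+1)) · R^LC(h). -/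

import Mathlib

open scoped Classical

/-- Lemma 1: R^MC(h) = ((k−1)/(θ(k−2)+1))·R^LC(h), where, per the
generation process of D' (true label with probability θ, uniform complementary label
with probability 1−θ), R^LC(h) = E_{(x,y)∼D}[θ·I(y ≠ h(x)) + ((1−θ)/(k−1))·∑_{ȳ≠y} I(ȳ = h(x))]. -/
theorem mc_risk_eq_lc_risk
    {X : Type*} {k : ℕ} (hk : 2 ≤ k) (D : PMF (X × Fin k))
    (θ : ℝ) (hθ : θ ∈ Set.Icc (0 : ℝ) 1) (h : X → Fin k) :
    (∑' p : X × Fin k, (D p).toReal * (if h p.1 ≠ p.2 then (1 : ℝ) else 0))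
      = ((k : ℝ) - 1) / (θ * ((k : ℝ) - 2) + 1) *
        ∑' p : X × Fin k, (D p).toReal *
          (θ * (if p.2 ≠ h p.1 then (1 : ℝ) else 0) +
            (1 - θ) / ((k : ℝ) - 1) *
              ∑ yb ∈ Finset.univ.erase p.2, (if yb = h p.1 then (1 : ℝ) else 0)) := by
  obtain ⟨hθ0, hθ1⟩ := hθ
  have hk1 : (1 : ℝ) ≤ (k : ℝ) - 1 := by
    have : (2 : ℝ) ≤ (k : ℝ) := by exact_mod_cast hk
    linarith
  have hk1pos : (0 : ℝ) < (k : ℝ) - 1 := by linarith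
  have hden : (0 : ℝ) < θ * ((k : ℝ) - 2) + 1 := by nlinarith
  set c : ℝ := (θ * ((k : ℝ) - 2) + 1) / ((k : ℝ) - 1) with hc
  have key : ∀ p : X × Fin k,
      (D p).toReal *
          (θ * (if p.2 ≠ h p.1 then (1 : ℝ) else 0) +
            (1 - θ) / ((k : ℝ) - 1) *
              ∑ yb ∈ Finset.univ.erase p.2, (if yb = h p.1 then (1 : ℝ) else 0))
        = (D p).toReal * (if h p.1 ≠ p.2 then (1 : ℝ) else 0) * c := by
    intro p
    have hsum : (∑ yb ∈ Finset.univ.erase p.2, (if yb = h p.1 then (1 : ℝ) else 0))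
        = if h p.1 ∈ Finset.univ.erase p.2 then (1 : ℝ) else 0 := by
      simp [Finset.sum_ite_eq']
    rw [hsum]
    by_cases hp : h p.1 = p.2
    · simp [hp, hc]
    · have h1 : h p.1 ∈ Finset.univ.erase p.2 := Finset.mem_erase.2 ⟨hp, Finset.mem_univ _⟩
      have h2 : p.2 ≠ h p.1 := fun e => hp e.symm
      rw [if_pos h1, if_pos h2, if_pos hp]
      have : θ * 1 + (1 - θ) / ((k : ℝ) - 1) * 1 = c := by
        field_simp [hc]
        rw [hc]; field_simp [hk1pos.ne']
        ring
      rw [this]; ring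
  rw [tsum_congr key, tsum_mul_right]
  have : ((k : ℝ) - 1) / (θ * ((k : ℝ) - 2) + 1) * c = 1 := by
    field_simp [hc]
    rw [hc]; field_simp [hk1pos.ne']
  rw [mul_comm (((k : ℝ) - 1) / (θ * ((k : ℝ) - 2) + 1)), mul_assoc,
    mul_comm c, this, mul_one]
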